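/- Let V be a finite set with n ≥ 1 elements, c ∈ (0,1), and let I : V → Finset V assign to each node a nonempty in-neighbor set. Define the operator T on functions f : V × V → ℝ by T(f)(u,u) = 1 and, for u ≠ v, T(f)(u,v) = (c/(|I(u)|·|I(v)|)) · ∑_{u'∈I(u)} ∑_{v'∈I(v)} f(u',v'). Then T is a contraction with Lipschitz constant c in the sup-norm on functions bounded by 1, and hence the SimRank equation s = T(s) has a unique solution, which takes values in [0,1]. -/

import Mathlib

open Finset

/-!
Off the diagonal, `T f (u, v)` is `c` times the mean of `f` over `I u ×ˢ I v`, and a mean of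
values in an interval stays in it, provided the interval contains `0`, the junk mean of the empty
family. Applied to `f - g` this makes `T` a `c`-Lipschitz map for the sup-norm, hence a
contraction; applied to `f` it shows that `T` preserves the closed set of `[0,1]`-valued
functions, which therefore contains the Banach fixed point.
-/

section Mean

variable {ι K : Type*} [Field K] [LinearOrder K] [IsStrictOrderedRing K]

theorem Finset.sum_div_card_mem_Icc {s : Finset ι} {f : ι → K} {a b : K} (ha : a ≤ 0)
    (hb : 0 ≤ b) (hf : ∀ i ∈ s, f i ∈ Set.Icc a b) : (∑ i ∈ s, f i) / #s ∈ Set.Icc a b := by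
  rcases s.eq_empty_or_nonempty with rfl | hs
  · simp [ha, hb]
  have hcard : (0 : K) < #s := by exact_mod_cast hs.card_pos
  rw [Set.mem_Icc, le_div_iff₀ hcard, div_le_iff₀ hcard, mul_comm a, mul_comm b,
    ← nsmul_eq_mul, ← nsmul_eq_mul]
  exact ⟨card_nsmul_le_sum s f a fun i hi => (hf i hi).1,
    sum_le_card_nsmul s f b fun i hi => (hf i hi).2⟩

end Mean

section SimRank

variable {V : Type*} [DecidableEq V]

noncomputable def simrankOp (c : ℝ) (I : V → Finset V) (f : V × V → ℝ) : V × V → ℝ :=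
  fun (u, v) => if u = v then 1
    else (c / ((#(I u) : ℝ) * (#(I v) : ℝ))) * ∑ u' ∈ I u, ∑ v' ∈ I v, f (u', v')

variable {c : ℝ} {I : V → Finset V}

theorem simrankOp_apply_of_ne (f : V × V → ℝ) {u v : V} (huv : u ≠ v) :
    simrankOp c I f (u, v) = c * ((∑ p ∈ I u ×ˢ I v, f p) / #(I u ×ˢ I v)) := by
  simp only [simrankOp, if_neg huv, sum_product, card_product, Nat.cast_mul]
  ring

theorem abs_simrankOp_sub_le (hc : 0 ≤ c) {f g : V × V → ℝ} {D : ℝ} (hD : 0 ≤ D)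
    (hfg : ∀ r, |f r - g r| ≤ D) (q : V × V) :
    |simrankOp c I f q - simrankOp c I g q| ≤ c * D := by
  obtain ⟨u, v⟩ := q
  by_cases huv : u = v
  · simp [simrankOp, huv, mul_nonneg hc hD]
  have hmean : (∑ p ∈ I u ×ˢ I v, (f p - g p)) / #(I u ×ˢ I v) ∈ Set.Icc (-D) D :=
    sum_div_card_mem_Icc (by linarith) hD fun p _ => abs_le.mp (hfg p)
  rw [simrankOp_apply_of_ne f huv, simrankOp_apply_of_ne g huv, ← mul_sub, ← sub_div,
    ← sum_sub_distrib, abs_mul, abs_of_nonneg hc]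
  exact mul_le_mul_of_nonneg_left (abs_le.mpr hmean) hc

theorem simrankOp_mem_Icc (hc0 : 0 ≤ c) (hc1 : c ≤ 1) {f : V × V → ℝ}
    (hf : ∀ q, f q ∈ Set.Icc (0 : ℝ) 1) (q : V × V) : simrankOp c I f q ∈ Set.Icc (0 : ℝ) 1 := by
  obtain ⟨u, v⟩ := q
  by_cases huv : u = v
  · simp [simrankOp, huv]
  obtain ⟨hmean0, hmean1⟩ :=
    sum_div_card_mem_Icc (s := I u ×ˢ I v) le_rfl zero_le_one fun p _ => hf p
  rw [simrankOp_apply_of_ne f huv]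
  exact ⟨mul_nonneg hc0 hmean0, mul_le_one₀ hc1 hmean0 hmean1⟩

theorem abs_simrankOp_sub_le_mul_iSup [Finite V] (hc : 0 ≤ c) (f g : V × V → ℝ) (q : V × V) :
    |simrankOp c I f q - simrankOp c I g q| ≤ c * ⨆ r, |f r - g r| :=
  abs_simrankOp_sub_le hc (Real.iSup_nonneg fun _ => abs_nonneg _)
    (fun r => le_ciSup (f := fun r => |f r - g r|) (Set.finite_range _).bddAbove r) q

variable [Fintype V]

theorem contractingWith_simrankOp (hc0 : 0 ≤ c) (hc1 : c < 1) :
    ContractingWith c.toNNReal (simrankOp c I) := by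
  refine ⟨Real.toNNReal_lt_one.mpr hc1, LipschitzWith.of_dist_le_mul fun f g => ?_⟩
  rw [Real.coe_toNNReal c hc0, dist_pi_le_iff (mul_nonneg hc0 dist_nonneg)]
  intro q
  rw [Real.dist_eq]
  exact abs_simrankOp_sub_le hc0 dist_nonneg
    (fun r => by simpa only [Real.dist_eq] using dist_le_pi_dist f g r) q

theorem existsUnique_simrankOp_fixedPoint (hc0 : 0 ≤ c) (hc1 : c < 1) :
    ∃! s : V × V → ℝ, (∀ q, s q ∈ Set.Icc (0 : ℝ) 1) ∧ simrankOp c I s = s := by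
  let unitValued : Set (V × V → ℝ) := Set.univ.pi fun _ => Set.Icc 0 1
  have hmaps : Set.MapsTo (simrankOp c I) unitValued unitValued := fun f hf =>
    Set.mem_univ_pi.mpr (simrankOp_mem_Icc hc0 hc1.le (Set.mem_univ_pi.mp hf))
  have hcontr := contractingWith_simrankOp (I := I) hc0 hc1
  obtain ⟨s, hs, hfix, -⟩ := (hcontr.restrict hmaps).exists_fixedPoint'
    (isClosed_set_pi fun _ _ => isClosed_Icc).isComplete hmaps
    (x := 0) (Set.mem_univ_pi.mpr fun _ => Set.left_mem_Icc.mpr zero_le_one) (edist_ne_top _ _)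
  exact ⟨s, ⟨Set.mem_univ_pi.mp hs, hfix⟩, fun t ht => hcontr.fixedPoint_unique' ht.2 hfix⟩

end SimRank

theorem simrank_operator_contraction_and_unique_fixed_point_general
    {V : Type*} [Fintype V] [DecidableEq V]
    (c : ℝ) (hc0 : 0 < c) (hc1 : c < 1)
    (I : V → Finset V)
    (T : (V × V → ℝ) → (V × V → ℝ))
    (hT : ∀ f : V × V → ℝ, ∀ u v : V,
      T f (u, v) = if u = v then 1
        else (c / (((I u).card : ℝ) * ((I v).card : ℝ))) *
          ∑ u' ∈ I u, ∑ v' ∈ I v, f (u', v')) :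
    (∀ f g : V × V → ℝ, (∀ q, |f q| ≤ 1) → (∀ q, |g q| ≤ 1) →
      ∀ q : V × V, |T f q - T g q| ≤ c * ⨆ r : V × V, |f r - g r|) ∧
    (∃! s : V × V → ℝ, (∀ q, s q ∈ Set.Icc (0 : ℝ) 1) ∧ T s = s) := by
  obtain rfl : T = simrankOp c I := funext fun f => funext fun q => hT f q.1 q.2
  exact ⟨fun f g _ _ => abs_simrankOp_sub_le_mul_iSup hc0.le f g,
    existsUnique_simrankOp_fixedPoint hc0.le hc1⟩

/-- The SimRank operator `T` is a `c`-contraction in the sup-norm on functions bounded by `1`,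
and the SimRank equation `s = T s` has a unique solution, which takes values in `[0,1]`. -/
theorem simrank_operator_contraction_and_unique_fixed_point
    {V : Type*} [Fintype V] [DecidableEq V] (n : ℕ) (hn : 1 ≤ n)
    (hcard : Fintype.card V = n)
    (c : ℝ) (hc0 : 0 < c) (hc1 : c < 1)
    (I : V → Finset V) (hI : ∀ v, (I v).Nonempty)
    (T : (V × V → ℝ) → (V × V → ℝ))
    (hT : ∀ f : V × V → ℝ, ∀ u v : V,
      T f (u, v) = if u = v then 1
        else (c / (((I u).card : ℝ) * ((I v).card : ℝ))) *
          ∑ u' ∈ I u, ∑ v' ∈ I v, f (u', v')) :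
    (∀ f g : V × V → ℝ, (∀ q, |f q| ≤ 1) → (∀ q, |g q| ≤ 1) →
      ∀ q : V × V, |T f q - T g q| ≤ c * ⨆ r : V × V, |f r - g r|) ∧
    (∃! s : V × V → ℝ, (∀ q, s q ∈ Set.Icc (0 : ℝ) 1) ∧ T s = s) :=
  simrank_operator_contraction_and_unique_fixed_point_general c hc0 hc1 I T hT
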